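/- If f is a nonnegative integrable function on ℝ^D with density ρ > 0, bulk velocity u, and temperature T > 0, then among all nonnegative integrable functions g with the same moments (ρ, u, T), the Maxwellian M^{ρ,u,T} uniquely minimizes the Boltzmann entropy H(g) = ∫ g log g dv. -/

import Mathlib

open MeasureTheory Real

/-!
Gibbs' inequality: `F = M · klFun (g / M) = g log g - g log M - g + M` is nonnegative and vanishes
exactly where `g = M`. Since `log M` is an affine function of `‖v - u‖²`, the cross term
`∫ g log M` depends only on the mass and energy of `g`, which are those of `M`; hence
`∫ F = H(g) - H(M)`. The energy of `M` is the second moment of a Gaussian, computed in polar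
coordinates.
-/

/-- The Maxwellian distribution with density `ρ`, bulk velocity `u` and temperature `T`. -/
noncomputable def maxwellian (D : ℕ) (ρ T : ℝ) (u : EuclideanSpace ℝ (Fin D)) :
    EuclideanSpace ℝ (Fin D) → ℝ :=
  fun v => ρ / (2 * π * T) ^ ((D : ℝ) / 2) * Real.exp (-‖v - u‖ ^ 2 / (2 * T))

section Gibbs

open InformationTheory

lemma mul_klFun_div {x y : ℝ} (hy : y ≠ 0) :
    y * klFun (x / y) = x * log x - x * log y - x + y := by
  rcases eq_or_ne x 0 with rfl | hx
  · simp [klFun_apply]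
  · rw [klFun_apply, log_div hx hy]
    field_simp
    ring

variable {α : Type*} [MeasurableSpace α] {μ : Measure α} {f g : α → ℝ}

lemma integral_mul_klFun_div (hf : ∀ x, f x ≠ 0) (hfi : Integrable f μ) (hgi : Integrable g μ)
    (hglogg : Integrable (fun x => g x * log (g x)) μ)
    (hglogf : Integrable (fun x => g x * log (f x)) μ) :
    ∫ x, f x * klFun (g x / f x) ∂μ =
      (∫ x, g x * log (g x) ∂μ) - (∫ x, g x * log (f x) ∂μ) - (∫ x, g x ∂μ) + ∫ x, f x ∂μ := by
  simp_rw [mul_klFun_div (hf _)]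
  rw [integral_add ?_ hfi, integral_sub ?_ hgi, integral_sub hglogg hglogf]
  exacts [hglogg.sub hglogf, (hglogg.sub hglogf).sub hgi]

theorem integral_mul_log_le_and_eq_iff (hf : ∀ x, 0 < f x) (hg : ∀ x, 0 ≤ g x)
    (hfi : Integrable f μ) (hgi : Integrable g μ)
    (hglogg : Integrable (fun x => g x * log (g x)) μ)
    (hglogf : Integrable (fun x => g x * log (f x)) μ)
    (hmass : ∫ x, g x ∂μ = ∫ x, f x ∂μ)
    (hcross : ∫ x, g x * log (f x) ∂μ = ∫ x, f x * log (f x) ∂μ) :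
    ∫ x, f x * log (f x) ∂μ ≤ ∫ x, g x * log (g x) ∂μ ∧
      (∫ x, g x * log (g x) ∂μ = ∫ x, f x * log (f x) ∂μ ↔ g =ᵐ[μ] f) := by
  set F := fun x => f x * klFun (g x / f x)
  have hF : ∫ x, F x ∂μ = (∫ x, g x * log (g x) ∂μ) - ∫ x, f x * log (f x) ∂μ := by
    rw [integral_mul_klFun_div (fun x => (hf x).ne') hfi hgi hglogg hglogf, hmass, hcross]
    ring
  have hF_nonneg : 0 ≤ F := fun x =>
    mul_nonneg (hf x).le (klFun_nonneg (div_nonneg (hg x) (hf x).le))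
  have hF_eq_zero_iff (x : α) : F x = 0 ↔ g x = f x := by
    rw [mul_eq_zero, klFun_eq_zero_iff (div_nonneg (hg x) (hf x).le),
      div_eq_one_iff_eq (hf x).ne']
    simp [(hf x).ne']
  have hFi : Integrable F μ := by
    refine (((hglogg.sub hglogf).sub hgi).add hfi).congr (.of_forall fun x => ?_)
    simp [F, mul_klFun_div (hf x).ne']
  refine ⟨by linarith [integral_nonneg (μ := μ) hF_nonneg], ?_⟩
  rw [← sub_eq_zero, ← hF, integral_eq_zero_iff_of_nonneg hF_nonneg hFi]
  exact Filter.eventually_congr (.of_forall hF_eq_zero_iff)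

end Gibbs

lemma integral_rpow_add_two_mul_exp_neg_mul_sq {b s : ℝ} (hb : 0 < b) (hs : -1 < s) :
    ∫ y in Set.Ioi (0 : ℝ), y ^ (s + 2) * exp (-b * y ^ 2) =
      (s + 1) / (2 * b) * ∫ y in Set.Ioi (0 : ℝ), y ^ s * exp (-b * y ^ 2) := by
  have h := integral_rpow_mul_exp_neg_mul_rpow two_pos (by linarith : -1 < s + 2) hb
  have h' := integral_rpow_mul_exp_neg_mul_rpow two_pos hs hb
  simp only [rpow_two] at h h'
  rw [h, h', show (s + 2 + 1) / 2 = (s + 1) / 2 + 1 by ring, Gamma_add_one (by linarith),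
    show -(s + 2 + 1) / 2 = -(s + 1) / 2 - 1 by ring, rpow_sub hb, rpow_one]
  field_simp

section Radial

variable {E : Type*} [NormedAddCommGroup E] [NormedSpace ℝ E] [FiniteDimensional ℝ E]
  [MeasurableSpace E] [BorelSpace E] (μ : Measure E) [μ.IsAddHaarMeasure]

lemma integrable_norm_pow_mul_exp_neg_mul_sq_norm {b : ℝ} (hb : 0 < b) (k : ℕ) :
    Integrable (fun x => ‖x‖ ^ k * exp (-b * ‖x‖ ^ 2)) μ := by
  rcases subsingleton_or_nontrivial E with hE | hE
  · simp [Subsingleton.elim _ (0 : E)]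
  rw [integrable_fun_norm_addHaar μ (f := fun y => y ^ k * exp (-b * y ^ 2))]
  refine (integrableOn_rpow_mul_exp_neg_mul_sq hb (s := (Module.finrank ℝ E - 1 + k : ℕ))
    (neg_one_lt_zero.trans_le (Nat.cast_nonneg _))).congr_fun (fun y _ => ?_) measurableSet_Ioi
  simp only [rpow_natCast, smul_eq_mul, pow_add]
  ring

lemma integral_sq_norm_mul_exp_neg_mul_sq_norm {b : ℝ} (hb : 0 < b) :
    ∫ x, ‖x‖ ^ 2 * exp (-b * ‖x‖ ^ 2) ∂μ =
      Module.finrank ℝ E / (2 * b) * ∫ x, exp (-b * ‖x‖ ^ 2) ∂μ := by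
  rcases subsingleton_or_nontrivial E with hE | hE
  · simp [Subsingleton.elim _ (0 : E), Module.finrank_zero_of_subsingleton]
  rw [integral_fun_norm_addHaar μ (fun y => y ^ 2 * exp (-b * y ^ 2)),
    integral_fun_norm_addHaar μ (fun y => exp (-b * y ^ 2))]
  set n := Module.finrank ℝ E - 1
  have hn : (n : ℝ) + 1 = Module.finrank ℝ E := by
    norm_cast
    exact Nat.sub_add_cancel Module.finrank_pos
  have hmoment : ∫ y in Set.Ioi (0 : ℝ), y ^ n • (y ^ 2 * exp (-b * y ^ 2)) =
      ∫ y in Set.Ioi (0 : ℝ), y ^ ((n : ℝ) + 2) * exp (-b * y ^ 2) := by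
    refine setIntegral_congr_fun measurableSet_Ioi fun y hy => ?_
    rw [rpow_add hy, rpow_natCast, rpow_two, smul_eq_mul, mul_assoc]
  have hbase : ∫ y in Set.Ioi (0 : ℝ), y ^ n • exp (-b * y ^ 2) =
      ∫ y in Set.Ioi (0 : ℝ), y ^ (n : ℝ) * exp (-b * y ^ 2) := by
    simp only [rpow_natCast, smul_eq_mul]
  rw [hmoment, hbase, integral_rpow_add_two_mul_exp_neg_mul_sq hb
    (neg_one_lt_zero.trans_le (Nat.cast_nonneg _)), hn]
  simp only [smul_eq_mul, nsmul_eq_mul]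
  ring

end Radial

section Maxwellian

variable {D : ℕ} {ρ T : ℝ} {u : EuclideanSpace ℝ (Fin D)}

lemma maxwellian_eq_mul_exp (v : EuclideanSpace ℝ (Fin D)) :
    maxwellian D ρ T u v =
      ρ / (2 * π * T) ^ ((D : ℝ) / 2) * exp (-(2 * T)⁻¹ * ‖v - u‖ ^ 2) := by
  unfold maxwellian
  ring_nf

lemma maxwellian_pos (hρ : 0 < ρ) (hT : 0 < T) (v : EuclideanSpace ℝ (Fin D)) :
    0 < maxwellian D ρ T u v := by
  unfold maxwellian
  positivity

lemma mul_log_maxwellian (hρ : 0 < ρ) (hT : 0 < T) (a : ℝ) (v : EuclideanSpace ℝ (Fin D)) :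
    a * log (maxwellian D ρ T u v) =
      log (ρ / (2 * π * T) ^ ((D : ℝ) / 2)) * a - (2 * T)⁻¹ * (‖v - u‖ ^ 2 * a) := by
  rw [maxwellian_eq_mul_exp, log_mul (by positivity) (exp_pos _).ne', log_exp]
  ring

lemma integrable_maxwellian (hT : 0 < T) : Integrable (maxwellian D ρ T u) := by
  have h := (integrable_norm_pow_mul_exp_neg_mul_sq_norm volume (b := (2 * T)⁻¹) (by positivity)
    0).comp_sub_right u
  simp_rw [funext maxwellian_eq_mul_exp]
  simpa using h.const_mul (ρ / (2 * π * T) ^ ((D : ℝ) / 2))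

lemma integrable_sq_norm_sub_mul_maxwellian (hT : 0 < T) :
    Integrable (fun v => ‖v - u‖ ^ 2 * maxwellian D ρ T u v) := by
  have h := (integrable_norm_pow_mul_exp_neg_mul_sq_norm volume (b := (2 * T)⁻¹) (by positivity)
    2).comp_sub_right u
  simp_rw [maxwellian_eq_mul_exp, mul_left_comm _ (ρ / _)]
  exact h.const_mul _

lemma integral_maxwellian (hT : 0 < T) : ∫ v, maxwellian D ρ T u v = ρ := by
  have hshift := integral_sub_right_eq_self (μ := volume)
    (fun v : EuclideanSpace ℝ (Fin D) => exp (-(2 * T)⁻¹ * ‖v‖ ^ 2)) u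
  simp_rw [maxwellian_eq_mul_exp]
  rw [integral_const_mul, hshift, GaussianFourier.integral_rexp_neg_mul_sq_norm (by positivity),
    finrank_euclideanSpace_fin, div_inv_eq_mul]
  field_simp

lemma integral_sq_norm_sub_mul_maxwellian (hT : 0 < T) :
    ∫ v, ‖v - u‖ ^ 2 * maxwellian D ρ T u v = D * ρ * T := by
  have hshift := integral_sub_right_eq_self (μ := volume)
    (fun v : EuclideanSpace ℝ (Fin D) => ‖v‖ ^ 2 * exp (-(2 * T)⁻¹ * ‖v‖ ^ 2)) u
  simp_rw [maxwellian_eq_mul_exp, mul_left_comm _ (ρ / _)]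
  rw [integral_const_mul, hshift, integral_sq_norm_mul_exp_neg_mul_sq_norm volume (by positivity),
    GaussianFourier.integral_rexp_neg_mul_sq_norm (by positivity), finrank_euclideanSpace_fin,
    div_inv_eq_mul]
  field_simp

variable {g : EuclideanSpace ℝ (Fin D) → ℝ}

lemma integrable_mul_log_maxwellian (hρ : 0 < ρ) (hT : 0 < T) (hg : Integrable g)
    (hg2 : Integrable (fun v => ‖v - u‖ ^ 2 * g v)) :
    Integrable (fun v => g v * log (maxwellian D ρ T u v)) := by
  simp_rw [mul_log_maxwellian hρ hT]
  exact (hg.const_mul _).sub (hg2.const_mul _)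

lemma integral_mul_log_maxwellian (hρ : 0 < ρ) (hT : 0 < T) (hg : Integrable g)
    (hg2 : Integrable (fun v => ‖v - u‖ ^ 2 * g v)) :
    ∫ v, g v * log (maxwellian D ρ T u v) =
      log (ρ / (2 * π * T) ^ ((D : ℝ) / 2)) * (∫ v, g v) -
        (2 * T)⁻¹ * ∫ v, ‖v - u‖ ^ 2 * g v := by
  simp_rw [mul_log_maxwellian hρ hT]
  rw [integral_sub (hg.const_mul _) (hg2.const_mul _), integral_const_mul, integral_const_mul]

end Maxwellian

theorem maxwellian_minimizes_entropy_general (D : ℕ) (hD : 1 ≤ D) (ρ T : ℝ) (hρ : 0 < ρ)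
    (hT : 0 < T) (u : EuclideanSpace ℝ (Fin D)) (g : EuclideanSpace ℝ (Fin D) → ℝ)
    (hg_int : Integrable g) (hg_nonneg : ∀ v, 0 ≤ g v)
    (hg_mass : ∫ v, g v = ρ)
    (hg_energy : ∫ v, ‖v - u‖ ^ 2 * g v = D * ρ * T)
    (hg_ent : Integrable (fun v => g v * Real.log (g v))) :
    (∫ v, maxwellian D ρ T u v * Real.log (maxwellian D ρ T u v))
        ≤ ∫ v, g v * Real.log (g v) ∧
    ((∫ v, g v * Real.log (g v))
        = (∫ v, maxwellian D ρ T u v * Real.log (maxwellian D ρ T u v))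
      ↔ g =ᵐ[volume] maxwellian D ρ T u) := by
  -- a non-integrable energy integrand would have Bochner integral `0 ≠ D ρ T`
  have hg_energy_int : Integrable (fun v => ‖v - u‖ ^ 2 * g v) := by
    by_contra h
    rw [integral_undef h] at hg_energy
    exact (mul_pos (mul_pos (Nat.cast_pos.mpr hD) hρ) hT).ne hg_energy
  have hM_int := integrable_maxwellian (D := D) (ρ := ρ) (u := u) hT
  have hM_energy_int := integrable_sq_norm_sub_mul_maxwellian (D := D) (ρ := ρ) (u := u) hT
  refine integral_mul_log_le_and_eq_iff (maxwellian_pos hρ hT) hg_nonneg hM_int hg_int hg_ent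
    (integrable_mul_log_maxwellian hρ hT hg_int hg_energy_int) ?_ ?_
  · rw [hg_mass, integral_maxwellian hT]
  · rw [integral_mul_log_maxwellian hρ hT hg_int hg_energy_int,
      integral_mul_log_maxwellian hρ hT hM_int hM_energy_int, hg_mass, hg_energy,
      integral_maxwellian hT, integral_sq_norm_sub_mul_maxwellian hT]

/-- Among all nonnegative integrable functions `g` with prescribed moments
`(ρ, u, T)`, the Maxwellian `M^{ρ,u,T}` uniquely (up to a.e. equality) minimizes the
Boltzmann entropy `H(g) = ∫ g log g dv`. -/
theorem maxwellian_minimizes_entropy (D : ℕ) (hD : 1 ≤ D) (ρ T : ℝ) (hρ : 0 < ρ)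
    (hT : 0 < T) (u : EuclideanSpace ℝ (Fin D)) (g : EuclideanSpace ℝ (Fin D) → ℝ)
    (hg_int : Integrable g) (hg_nonneg : ∀ v, 0 ≤ g v)
    (hg_mass : ∫ v, g v = ρ)
    (hg_mom : ∫ v, g v • v = ρ • u)
    (hg_energy : ∫ v, ‖v - u‖ ^ 2 * g v = D * ρ * T)
    (hg_ent : Integrable (fun v => g v * Real.log (g v))) :
    (∫ v, maxwellian D ρ T u v * Real.log (maxwellian D ρ T u v))
        ≤ ∫ v, g v * Real.log (g v) ∧
    ((∫ v, g v * Real.log (g v))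
        = (∫ v, maxwellian D ρ T u v * Real.log (maxwellian D ρ T u v))
      ↔ g =ᵐ[volume] maxwellian D ρ T u) :=
  maxwellian_minimizes_entropy_general D hD ρ T hρ hT u g hg_int hg_nonneg hg_mass hg_energy hg_ent
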